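/- arXiv:0906.3993 — 2 statements merged into one kernel-verified Lean document; each statement's English description precedes it below -/
import Mathlib

section
/- Let G be a finite simple graph with n vertices and minimum degree δ satisfying 1000 ≤ δ ≤ 24000. Then the signed domination number of G satisfies γ_s(G) ≤ ((√(ln(δ+1)·(11.8 − 0.48 ln δ)) + 0.25) / √(δ+1)) · n. -/
/-- `f : V → ℤ` is a signed domination function of `G`: it takes values in `{-1, +1}`
and sums to at least `1` over every closed neighbourhood. -/
def SimpleGraph.IsSignedDominationFunction {V : Type*} [Fintype V] [DecidableEq V]
    (G : SimpleGraph V) [DecidableRel G.Adj] (f : V → ℤ) : Prop :=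
  (∀ v, f v = 1 ∨ f v = -1) ∧
  ∀ v : V, 1 ≤ ∑ u ∈ insert v (G.neighborFinset v), f u

/-- The signed domination number `γ_s(G)`. -/
noncomputable def SimpleGraph.signedDominationNumber {V : Type*} [Fintype V] [DecidableEq V]
    (G : SimpleGraph V) [DecidableRel G.Adj] : ℤ :=
  sInf {s : ℤ | ∃ f : V → ℤ, G.IsSignedDominationFunction f ∧ s = ∑ v, f v}

/-!
Random construction. Put every vertex into a set `S` independently with probability
`p = (1 - ε) / 2`, call `v` a majority vertex when at least half of its closed neighbourhood
`N[v]` lies in `S`, and set `f = -1` exactly on the vertices of `S` outside the closed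
neighbourhoods of the majority vertices. Then `f` is a signed domination function with
`∑ f ≤ n - 2|S| + 2 ∑_{v majority} |N[v]|`. Since `E|S| = p n` and, by a Chernoff bound,
`P(v is a majority vertex) ≤ (1 - ε²)^(|N[v]|/2)`, averaging gives
`γ_s ≤ (ε + 2 (δ + 1) exp (-ε² (δ + 1) / 2)) n` as soon as `ε² (δ + 1) ≥ 2`.
Taking `ε² (δ + 1) = ln (δ + 1) (11.8 - 0.48 ln δ)` makes the second term at most
`n / (4 √(δ + 1))` when `1000 ≤ δ ≤ 24000`.
-/

open Finset Real

section RandomSubset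

variable {V : Type*} [Fintype V]

/-- The probability that the random subset of `V` containing each element independently with
probability `p` equals `S`. -/
def subsetWeight (p : ℝ) (S : Finset V) : ℝ :=
  p ^ #S * (1 - p) ^ (Fintype.card V - #S)

lemma subsetWeight_nonneg {p : ℝ} (hp₀ : 0 ≤ p) (hp₁ : p ≤ 1) (S : Finset V) :
    0 ≤ subsetWeight p S := by
  unfold subsetWeight
  have : 0 ≤ 1 - p := by linarith
  positivity

lemma sum_subsetWeight (p : ℝ) : ∑ S : Finset V, subsetWeight p S = 1 := by
  simp [subsetWeight, Fintype.sum_pow_mul_eq_add_pow]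

variable [DecidableEq V]

lemma sum_subsetWeight_mul_pow_card_inter (p t : ℝ) (A : Finset V) :
    ∑ S : Finset V, subsetWeight p S * t ^ #(S ∩ A) = (1 - p + p * t) ^ #A := by
  let g : V → ℝ := fun u => if u ∈ A then t else 1
  calc ∑ S : Finset V, subsetWeight p S * t ^ #(S ∩ A)
      = ∑ S ∈ univ.powerset, (∏ u ∈ S, p * g u) * ∏ _u ∈ univ \ S, (1 - p) := by
        rw [powerset_univ]
        refine sum_congr rfl fun S _ => ?_
        rw [prod_mul_distrib, prod_const, prod_ite_mem, prod_const, prod_const,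
          card_univ_sdiff, subsetWeight]
        ring
    _ = ∏ u, (p * g u + (1 - p)) := (prod_add _ _ _).symm
    _ = ∏ u, if u ∈ A then 1 - p + p * t else 1 :=
        prod_congr rfl fun u _ => by simp only [g]; split_ifs <;> ring
    _ = (1 - p + p * t) ^ #A := by rw [prod_ite_mem, univ_inter, prod_const]

lemma sum_subsetWeight_mul_ite_mem (p : ℝ) (v : V) :
    ∑ S : Finset V, subsetWeight p S * (if v ∈ S then 1 else 0) = p := by
  have h := sum_subsetWeight_mul_pow_card_inter p 0 {v}
  have hpow (S : Finset V) : (0 : ℝ) ^ #(S ∩ {v}) = 1 - if v ∈ S then 1 else 0 := by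
    by_cases hv : v ∈ S <;> simp [hv, inter_singleton_of_mem, inter_singleton_of_notMem]
  simp only [hpow, mul_sub, mul_one, sum_sub_distrib, sum_subsetWeight, card_singleton] at h
  linarith

lemma sum_subsetWeight_mul_card (p : ℝ) :
    ∑ S : Finset V, subsetWeight p S * #S = p * Fintype.card V := by
  have hcard (S : Finset V) : (#S : ℝ) = ∑ v, if v ∈ S then 1 else 0 := by simp
  simp_rw [hcard, mul_sum]
  rw [sum_comm]
  simp only [sum_subsetWeight_mul_ite_mem, sum_const, card_univ, nsmul_eq_mul, mul_comm]

/-- Chernoff bound: Markov's inequality for `μ ^ (2 * #(S ∩ A))`, where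
`μ ^ 2 = (1 + ε) / (1 - ε)`. -/
lemma sum_subsetWeight_majority_le {ε : ℝ} (hε₀ : 0 ≤ ε) (hε₁ : ε < 1) (A : Finset V) :
    ∑ S with #A ≤ 2 * #(S ∩ A), subsetWeight ((1 - ε) / 2) S ≤ √(1 - ε ^ 2) ^ #A := by
  set p := (1 - ε) / 2
  set μ := √((1 + ε) / (1 - ε))
  have hsub : 0 < 1 - ε := by linarith
  have hμ_sq : μ ^ 2 = (1 + ε) / (1 - ε) := sq_sqrt (by positivity)
  have hμ_one : 1 ≤ μ := one_le_sqrt.mpr ((one_le_div hsub).mpr (by linarith))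
  have hμ_mul : √(1 - ε ^ 2) * μ = 1 + ε := by
    rw [← sqrt_mul (by nlinarith), show (1 - ε ^ 2) * ((1 + ε) / (1 - ε)) = (1 + ε) ^ 2 by
      field_simp; ring]
    exact sqrt_sq (by linarith)
  have hw : ∀ S : Finset V, 0 ≤ subsetWeight p S :=
    subsetWeight_nonneg (by simp only [p]; linarith) (by simp only [p]; linarith)
  have hmoment : (∑ S with #A ≤ 2 * #(S ∩ A), subsetWeight p S) * μ ^ #A ≤ (1 + ε) ^ #A :=
    calc (∑ S with #A ≤ 2 * #(S ∩ A), subsetWeight p S) * μ ^ #A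
        = ∑ S with #A ≤ 2 * #(S ∩ A), subsetWeight p S * μ ^ #A := sum_mul _ _ _
      _ ≤ ∑ S with #A ≤ 2 * #(S ∩ A), subsetWeight p S * (μ ^ 2) ^ #(S ∩ A) := by
        refine sum_le_sum fun S hS => mul_le_mul_of_nonneg_left ?_ (hw S)
        rw [← pow_mul]
        exact pow_le_pow_right₀ hμ_one (mem_filter.mp hS).2
      _ ≤ ∑ S, subsetWeight p S * (μ ^ 2) ^ #(S ∩ A) :=
        sum_le_sum_of_subset_of_nonneg (filter_subset _ _) fun S _ _ => by
          have := hw S; positivity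
      _ = (1 + ε) ^ #A := by
        rw [sum_subsetWeight_mul_pow_card_inter, hμ_sq]
        congr 1
        field_simp
        ring
  rw [← hμ_mul, mul_pow] at hmoment
  exact le_of_mul_le_mul_right hmoment (pow_pos (by linarith) _)

end RandomSubset

lemma mul_pow_le_mul_pow_of_le {q : ℝ} (hq : 0 ≤ q) {D m : ℕ} (hD : 1 ≤ D * (1 - q))
    (hDm : D ≤ m) : m * q ^ m ≤ D * q ^ D := by
  induction m, hDm using Nat.le_induction with
  | base => rfl
  | succ m hDm ih =>
    have hstep : (m + 1 : ℝ) * q ≤ m := by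
      have : (D : ℝ) ≤ m := by exact_mod_cast hDm
      nlinarith
    calc ((m + 1 : ℕ) : ℝ) * q ^ (m + 1) = (m + 1) * q * q ^ m := by push_cast; ring
      _ ≤ m * q ^ m := mul_le_mul_of_nonneg_right hstep (pow_nonneg hq m)
      _ ≤ D * q ^ D := ih

lemma one_le_mul_one_sub_sqrt_one_sub {x D : ℝ} (hx₀ : 0 ≤ x) (hx₁ : x ≤ 1)
    (h : 2 ≤ D * x) :
    1 ≤ D * (1 - √(1 - x)) := by
  have hsqrt : √(1 - x) ≤ 1 - x / 2 := (sqrt_le_left (by linarith)).mpr (by nlinarith)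
  have hD : 0 < D := by nlinarith
  nlinarith [mul_le_mul_of_nonneg_left hsqrt hD.le]

lemma sqrt_one_sub_pow_le_exp {x : ℝ} (n : ℕ) : √(1 - x) ^ n ≤ exp (-(n * x) / 2) := by
  have hsqrt : √(1 - x) ≤ exp (-x / 2) := by
    rw [exp_half]
    exact sqrt_le_sqrt (by linarith [add_one_le_exp (-x)])
  calc √(1 - x) ^ n ≤ exp (-x / 2) ^ n := pow_le_pow_left₀ (sqrt_nonneg _) hsqrt n
    _ = exp (-(n * x) / 2) := by rw [← exp_nat_mul]; ring_nf

lemma two_mul_mul_exp_neg_half_le {D L : ℝ} (hD : 0 < D) (hL : 6 + 3 * log D ≤ L) :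
    2 * D * exp (-L / 2) ≤ 1 / 4 / √D := by
  have h8 : (8 : ℝ) ≤ exp 3 := by
    have h2 : (2 : ℝ) ≤ exp 1 := by linarith [add_one_le_exp 1]
    calc (8 : ℝ) = 2 ^ 3 := by norm_num
      _ ≤ exp 1 ^ 3 := pow_le_pow_left₀ (by norm_num) h2 3
      _ = exp 3 := by rw [← exp_nat_mul]; norm_num
  have hgrowth : 8 * (D * √D) ≤ exp (L / 2) :=
    calc 8 * (D * √D) ≤ exp 3 * (exp (log D) * exp (log D / 2)) := by
          rw [exp_log hD, exp_half, exp_log hD]; gcongr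
      _ = exp (3 + 3 / 2 * log D) := by rw [← exp_add, ← exp_add]; ring_nf
      _ ≤ exp (L / 2) := exp_le_exp.mpr (by linarith)
  have hinv : exp (-L / 2) * exp (L / 2) = 1 := by rw [← exp_add]; ring_nf; exact exp_zero
  rw [le_div_iff₀ (sqrt_pos.mpr hD)]
  nlinarith [exp_pos (-L / 2)]

lemma Finset.sum_ite_mem_neg_one {α : Type*} [DecidableEq α] (A T : Finset α) :
    ∑ u ∈ A, (if u ∈ T then (-1 : ℤ) else 1) = #A - 2 * #(A ∩ T) := by
  have h := card_filter_add_card_filter_not (· ∈ T) (s := A)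
  rw [filter_mem_eq_inter] at h
  rw [sum_ite, sum_const, sum_const, filter_mem_eq_inter, nsmul_eq_mul, nsmul_eq_mul]
  omega

namespace SimpleGraph

variable {V : Type*} [Fintype V] [DecidableEq V] (G : SimpleGraph V) [DecidableRel G.Adj]

def closedNeighborFinset (v : V) : Finset V := insert v (G.neighborFinset v)

lemma card_closedNeighborFinset (v : V) : #(G.closedNeighborFinset v) = G.degree v + 1 := by
  rw [closedNeighborFinset, card_insert_of_notMem (by simp), card_neighborFinset_eq_degree]

lemma signedDominationNumber_le {f : V → ℤ} (hf : G.IsSignedDominationFunction f) :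
    G.signedDominationNumber ≤ ∑ v, f v := by
  refine csInf_le ⟨-Fintype.card V, ?_⟩ ⟨f, hf, rfl⟩
  rintro _ ⟨g, hg, rfl⟩
  have hge : ∀ v, -1 ≤ g v := fun v => by rcases hg.1 v with h | h <;> omega
  simpa using sum_le_sum fun v (_ : v ∈ univ) => hge v

lemma isSignedDominationFunction_of_two_mul_card_inter_lt (T : Finset V)
    (hT : ∀ v, 2 * #(G.closedNeighborFinset v ∩ T) < #(G.closedNeighborFinset v)) :
    G.IsSignedDominationFunction (fun v => if v ∈ T then -1 else 1) := by
  refine ⟨fun v => by by_cases hv : v ∈ T <;> simp [hv], fun v => ?_⟩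
  have := hT v
  rw [← closedNeighborFinset, sum_ite_mem_neg_one]
  omega

def majorityVertices (S : Finset V) : Finset V :=
  {v | #(G.closedNeighborFinset v) ≤ 2 * #(S ∩ G.closedNeighborFinset v)}

def minusSet (S : Finset V) : Finset V :=
  S \ (G.majorityVertices S).biUnion G.closedNeighborFinset

lemma two_mul_card_inter_minusSet_lt (S : Finset V) (v : V) :
    2 * #(G.closedNeighborFinset v ∩ G.minusSet S) < #(G.closedNeighborFinset v) := by
  by_cases hv : v ∈ G.majorityVertices S
  · have hempty : G.closedNeighborFinset v ∩ G.minusSet S = ∅ := by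
      refine eq_empty_of_forall_notMem fun u hu => ?_
      simp only [minusSet, mem_inter, mem_sdiff, mem_biUnion] at hu
      exact hu.2.2 ⟨v, hv, hu.1⟩
    rw [hempty, card_closedNeighborFinset]
    simp
  · have hsub : G.closedNeighborFinset v ∩ G.minusSet S ⊆ S ∩ G.closedNeighborFinset v :=
      fun u hu => by
        simp only [minusSet, mem_inter, mem_sdiff] at hu ⊢
        exact ⟨hu.2.1, hu.1⟩
    simp only [majorityVertices, mem_filter, mem_univ, true_and, not_le] at hv
    have := card_le_card hsub
    omega

lemma card_le_card_minusSet_add (S : Finset V) :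
    #S ≤ #(G.minusSet S) + ∑ v ∈ G.majorityVertices S, #(G.closedNeighborFinset v) :=
  calc #S ≤ #(G.minusSet S ∪ (G.majorityVertices S).biUnion G.closedNeighborFinset) := by
        rw [minusSet, sdiff_union_self_eq_union]
        exact card_le_card subset_union_left
    _ ≤ _ := (card_union_le _ _).trans (Nat.add_le_add_left card_biUnion_le _)

lemma signedDominationNumber_le_card_sub (S : Finset V) :
    G.signedDominationNumber ≤
      Fintype.card V - 2 * #S +
        2 * ∑ v ∈ G.majorityVertices S, #(G.closedNeighborFinset v) := by
  have h := G.signedDominationNumber_le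
    (G.isSignedDominationFunction_of_two_mul_card_inter_lt _ (G.two_mul_card_inter_minusSet_lt S))
  rw [sum_ite_mem_neg_one, univ_inter, card_univ] at h
  have hS : (#S : ℤ) ≤
      #(G.minusSet S) + ∑ v ∈ G.majorityVertices S, #(G.closedNeighborFinset v) :=
    mod_cast G.card_le_card_minusSet_add S
  linarith

lemma signedDominationNumber_le_expectation {p : ℝ} (hp₀ : 0 ≤ p) (hp₁ : p ≤ 1) :
    (G.signedDominationNumber : ℝ) ≤ (1 - 2 * p) * Fintype.card V +
      2 * ∑ v, #(G.closedNeighborFinset v) *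
        ∑ S with v ∈ G.majorityVertices S, subsetWeight p S := by
  set c : V → ℝ := fun v => #(G.closedNeighborFinset v)
  have hS (S : Finset V) : (G.signedDominationNumber : ℝ) ≤
      Fintype.card V - 2 * #S + 2 * ∑ v ∈ G.majorityVertices S, c v := by
    simp only [c]; exact_mod_cast G.signedDominationNumber_le_card_sub S
  have hswap : ∑ S : Finset V, subsetWeight p S * ∑ v ∈ G.majorityVertices S, c v =
      ∑ v, c v * ∑ S with v ∈ G.majorityVertices S, subsetWeight p S := by
    simp only [mul_sum, mul_comm (c _), sum_mul]
    exact sum_comm' fun _ _ => by simp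
  calc (G.signedDominationNumber : ℝ)
      = ∑ S : Finset V, subsetWeight p S * G.signedDominationNumber := by
        rw [← sum_mul, sum_subsetWeight, one_mul]
    _ ≤ ∑ S : Finset V, subsetWeight p S *
          (Fintype.card V - 2 * #S + 2 * ∑ v ∈ G.majorityVertices S, c v) :=
        sum_le_sum fun S _ => mul_le_mul_of_nonneg_left (hS S) (subsetWeight_nonneg hp₀ hp₁ S)
    _ = _ := by
        simp only [mul_add, mul_sub, sum_add_distrib, sum_sub_distrib, ← sum_mul,
          sum_subsetWeight, mul_left_comm _ (2 : ℝ), ← mul_sum, sum_subsetWeight_mul_card,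
          hswap]
        ring

theorem signedDominationNumber_le_of_two_le_mul_sq {ε : ℝ} (hε₀ : 0 ≤ ε) (hε₁ : ε < 1)
    (h : 2 ≤ (G.minDegree + 1) * ε ^ 2) :
    (G.signedDominationNumber : ℝ) ≤
      (ε + 2 * (G.minDegree + 1) * exp (-((G.minDegree + 1) * ε ^ 2) / 2)) * Fintype.card V := by
  set D := G.minDegree + 1
  set q := √(1 - ε ^ 2)
  have hqD : 1 ≤ (D : ℝ) * (1 - q) :=
    one_le_mul_one_sub_sqrt_one_sub (sq_nonneg ε) (by nlinarith) (mod_cast h)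
  have hbad (v : V) : #(G.closedNeighborFinset v) *
      ∑ S with v ∈ G.majorityVertices S, subsetWeight ((1 - ε) / 2) S ≤ D * q ^ D :=
    calc _ ≤ #(G.closedNeighborFinset v) * q ^ #(G.closedNeighborFinset v) := by
          simp only [majorityVertices, mem_filter, mem_univ, true_and]
          exact mul_le_mul_of_nonneg_left (sum_subsetWeight_majority_le hε₀ hε₁ _)
            (Nat.cast_nonneg _)
      _ ≤ D * q ^ D := mul_pow_le_mul_pow_of_le (sqrt_nonneg _) hqD <| by
          rw [card_closedNeighborFinset]; exact Nat.add_le_add_right (G.minDegree_le_degree v) 1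
  calc (G.signedDominationNumber : ℝ)
      ≤ (1 - 2 * ((1 - ε) / 2)) * Fintype.card V + 2 * ∑ v, #(G.closedNeighborFinset v) *
          ∑ S with v ∈ G.majorityVertices S, subsetWeight ((1 - ε) / 2) S :=
        G.signedDominationNumber_le_expectation (by linarith) (by linarith)
    _ ≤ (1 - 2 * ((1 - ε) / 2)) * Fintype.card V + 2 * ∑ _v : V, D * q ^ D := by
        gcongr _ + 2 * ∑ v, ?_ with v
        exact hbad v
    _ = (ε + 2 * D * q ^ D) * Fintype.card V := by
        simp only [sum_const, card_univ, nsmul_eq_mul]; ring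
    _ ≤ _ := by
        have hexp := sqrt_one_sub_pow_le_exp (x := ε ^ 2) D
        push_cast [D] at hexp ⊢
        gcongr

end SimpleGraph

lemma exponent_bounds_of_le_of_le {δ : ℕ} (h₁ : 1000 ≤ δ) (h₂ : δ ≤ 24000) :
    6 + 3 * log (δ + 1) ≤ log (δ + 1) * (11.8 - 0.48 * log δ) ∧
      log (δ + 1) * (11.8 - 0.48 * log δ) < δ + 1 := by
  have hδ₁ : (1000 : ℝ) ≤ δ := by exact_mod_cast h₁
  have hδ₂ : (δ : ℝ) ≤ 24000 := by exact_mod_cast h₂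
  have hlog_lower : log (2 ^ 9) ≤ log (δ + 1) := log_le_log (by norm_num) (by linarith)
  have hlog_upper : log (δ + 1) ≤ log (2 ^ 15) := log_le_log (by positivity) (by linarith)
  have hlogδ_upper : log δ ≤ log (2 ^ 15) := log_le_log (by positivity) (by linarith)
  rw [log_pow, Nat.cast_ofNat] at hlog_lower hlog_upper hlogδ_upper
  have := log_two_gt_d9
  have := log_two_lt_d9
  have hfactor_lower : 6.8 ≤ 11.8 - 0.48 * log δ := by linarith
  have hfactor_upper : 11.8 - 0.48 * log δ ≤ 11.8 := by
    linarith [log_nonneg (by linarith : (1 : ℝ) ≤ δ)]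
  constructor <;> nlinarith

theorem signed_domination_upper_bound_delta_1000_24000_general
    {V : Type*} [Fintype V] [DecidableEq V]
    (G : SimpleGraph V) [DecidableRel G.Adj]
    (δ : ℕ) (hδdef : δ = G.minDegree) (hδ1 : 1000 ≤ δ) (hδ2 : δ ≤ 24000) :
    (G.signedDominationNumber : ℝ) ≤
      ((Real.sqrt (Real.log ((δ : ℝ) + 1) * (11.8 - 0.48 * Real.log (δ : ℝ))) + 0.25) /
        Real.sqrt ((δ : ℝ) + 1)) * (Fintype.card V : ℝ) := by
  obtain ⟨hL, hLD⟩ := exponent_bounds_of_le_of_le hδ1 hδ2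
  set D : ℝ := δ + 1
  set L := log D * (11.8 - 0.48 * log δ)
  have hD : 0 < D := by positivity
  have hlogD : 0 ≤ log D := log_nonneg (le_add_of_nonneg_left δ.cast_nonneg)
  have hL₀ : 0 ≤ L := by linarith
  set ε := √L / √D
  have hεD : D * ε ^ 2 = L := by
    rw [div_pow, sq_sqrt hL₀, sq_sqrt hD.le]; field_simp
  have hε₁ : ε < 1 := (div_lt_one (sqrt_pos.mpr hD)).mpr (sqrt_lt_sqrt hL₀ hLD)
  have hbound := G.signedDominationNumber_le_of_two_le_mul_sq (ε := ε) (by positivity) hε₁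
    (by rw [← hδdef]; change 2 ≤ D * ε ^ 2; linarith)
  rw [← hδdef, hεD] at hbound
  calc (G.signedDominationNumber : ℝ) ≤ (ε + 2 * D * exp (-L / 2)) * Fintype.card V := hbound
    _ ≤ ((√L + 0.25) / √D) * Fintype.card V := by
        gcongr
        rw [add_div]
        linarith [two_mul_mul_exp_neg_half_le hD hL]

theorem signed_domination_upper_bound_delta_1000_24000
    {V : Type*} [Fintype V] [DecidableEq V] [Nonempty V]
    (G : SimpleGraph V) [DecidableRel G.Adj]
    (δ : ℕ) (hδdef : δ = G.minDegree) (hδ1 : 1000 ≤ δ) (hδ2 : δ ≤ 24000) :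
    (G.signedDominationNumber : ℝ) ≤
      ((Real.sqrt (Real.log ((δ : ℝ) + 1) * (11.8 - 0.48 * Real.log (δ : ℝ))) + 0.25) /
        Real.sqrt ((δ : ℝ) + 1)) * (Fintype.card V : ℝ) :=
  signed_domination_upper_bound_delta_1000_24000_general G δ hδdef hδ1 hδ2
end

section
/- Let G be a finite simple graph with n vertices that is δ-regular (every vertex has degree δ), where δ is even. Then the signed domination number of G satisfies γ_s(G) ≥ n/(δ+1). -/
lemma sdf_key {V : Type*} [Fintype V] [DecidableEq V] (G : SimpleGraph V) [DecidableRel G.Adj]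
    (δ : ℕ) (hreg : G.IsRegularOfDegree δ) (f : V → ℤ)
    (hf : G.IsSignedDominationFunction f) :
    (Fintype.card V : ℤ) ≤ ((δ : ℤ) + 1) * ∑ v, f v := by
  classical
  have h1 : (Fintype.card V : ℤ) ≤ ∑ v, ∑ u ∈ insert v (G.neighborFinset v), f u := by
    calc (Fintype.card V : ℤ) = ∑ _v : V, (1 : ℤ) := by simp
    _ ≤ _ := Finset.sum_le_sum fun v _ => hf.2 v
  have hsym : ∀ u v : V, (u ∈ insert v (G.neighborFinset v)) ↔
      (v ∈ insert u (G.neighborFinset u)) := by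
    intro u v
    simp [SimpleGraph.mem_neighborFinset, G.adj_comm, eq_comm]
  have h2 : ∑ v, ∑ u ∈ insert v (G.neighborFinset v), f u = ((δ : ℤ) + 1) * ∑ v, f v := by
    have step : ∀ v : V, ∑ u ∈ insert v (G.neighborFinset v), f u
        = ∑ u : V, if u ∈ insert v (G.neighborFinset v) then f u else 0 := by
      intro v
      rw [Finset.sum_ite_mem, Finset.univ_inter]
    simp_rw [step]
    rw [Finset.sum_comm]
    have card_cn : ∀ u : V, (insert u (G.neighborFinset u)).card = δ + 1 := by
      intro u
      rw [Finset.card_insert_of_notMem (by simp), SimpleGraph.card_neighborFinset_eq_degree,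
        hreg u]
    calc ∑ u : V, ∑ v : V, (if u ∈ insert v (G.neighborFinset v) then f u else 0)
        = ∑ u : V, ∑ v : V, (if v ∈ insert u (G.neighborFinset u) then f u else 0) := by
          apply Finset.sum_congr rfl; intro u _
          apply Finset.sum_congr rfl; intro v _
          simp only [hsym u v]
      _ = ∑ u : V, ((δ : ℤ) + 1) * f u := by
          apply Finset.sum_congr rfl; intro u _
          rw [Finset.sum_ite_mem, Finset.univ_inter, Finset.sum_const, card_cn u]
          push_cast
          ring
      _ = ((δ : ℤ) + 1) * ∑ v, f v := by rw [Finset.mul_sum]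
  linarith [h1, h2.symm.le, h2.le]

theorem signed_domination_lower_bound_regular_even
    {V : Type*} [Fintype V] [DecidableEq V] (G : SimpleGraph V) [DecidableRel G.Adj]
    (δ : ℕ) (hreg : G.IsRegularOfDegree δ) (heven : Even δ) :
    (Fintype.card V : ℝ) / ((δ : ℝ) + 1) ≤ (G.signedDominationNumber : ℝ) := by
  classical
  set S := {s : ℤ | ∃ f : V → ℤ, G.IsSignedDominationFunction f ∧ s = ∑ v, f v} with hS
  have hne : S.Nonempty := by
    refine ⟨(Fintype.card V : ℤ), fun _ => 1, ⟨fun v => Or.inl rfl, fun v => ?_⟩, by simp⟩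
    rw [Finset.sum_const, Finset.card_insert_of_notMem (by simp),
      SimpleGraph.card_neighborFinset_eq_degree, hreg v]
    simp
  have hbdd : BddBelow S := by
    refine ⟨0, fun s hs => ?_⟩
    obtain ⟨f, hf, rfl⟩ := hs
    have h := sdf_key G δ hreg f hf
    nlinarith [Int.natCast_nonneg (Fintype.card V), Int.natCast_nonneg δ]
  have hmem : sInf S ∈ S := Int.csInf_mem hne hbdd
  obtain ⟨f, hf, hsum⟩ := hmem
  have h := sdf_key G δ hreg f hf
  have hpos : (0 : ℝ) < (δ : ℝ) + 1 := by positivity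
  rw [div_le_iff₀ hpos]
  have : (G.signedDominationNumber : ℝ) = ((∑ v, f v : ℤ) : ℝ) := by
    rw [SimpleGraph.signedDominationNumber, ← hS, hsum]
  rw [this]
  have h' : ((Fintype.card V : ℤ) : ℝ) ≤ (((δ : ℤ) + 1) * ∑ v, f v : ℤ) := by
    exact_mod_cast h
  push_cast at h' ⊢
  linarith
end
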